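/- arXiv:2511.19384 — 6 statements merged into one kernel-verified Lean document; each statement's English description precedes it below -/
import Mathlib

section
/- Let A and B be Hopf algebras over ℂ and τ : A × B → ℂ a skew pairing with convolution inverse τ⁻¹(a, b) = τ(S(a), b). Then the bilinear map σ : (A ⊗ B) × (A ⊗ B) → ℂ defined by σ(a ⊗ b, a' ⊗ b') = ε(a)ε(b')τ(a', b) is a normalised 2-cocycle for the tensor product Hopf algebra A ⊗ B: it satisfies σ(h_(1), k_(1)) σ(h_(2)k_(2), l) = σ(k_(1), l_(1)) σ(h, k_(2)l_(2)) for all h, k, l ∈ A ⊗ B, and σ(h, 1) = σ(1, h) = ε(h). -/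
open TensorProduct

/-- Convolution of two linear functionals on a coalgebra over `ℂ`:
`(conv f g) c = ∑ f c₍₁₎ * g c₍₂₎` in Sweedler notation. -/
noncomputable def conv {C : Type} [AddCommGroup C] [Module ℂ C] [Coalgebra ℂ C]
    (f g : C →ₗ[ℂ] ℂ) : C →ₗ[ℂ] ℂ :=
  LinearMap.mul' ℂ ℂ ∘ₗ TensorProduct.map f g ∘ₗ Coalgebra.comul

/-- Convolution of two bilinear forms on a coalgebra over `ℂ`:
`(conv₂ f g) h k = ∑ f h₍₁₎ k₍₁₎ * g h₍₂₎ k₍₂₎` in Sweedler notation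
(convolution with respect to the tensor product coalgebra `C ⊗ C`). -/
noncomputable def conv₂ {C : Type} [AddCommGroup C] [Module ℂ C] [Coalgebra ℂ C]
    (f g : C →ₗ[ℂ] C →ₗ[ℂ] ℂ) : C →ₗ[ℂ] C →ₗ[ℂ] ℂ :=
  TensorProduct.curry (conv (TensorProduct.lift f) (TensorProduct.lift g))

/-- The 2-cochain `σ(a ⊗ b, a' ⊗ b') = ε(a) ε(b') τ(a', b)` on the tensor
product Hopf algebra `A ⊗ B`, as a bilinear form. -/
noncomputable def sigmaOf {A B : Type} [Ring A] [Ring B]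
    [HopfAlgebra ℂ A] [HopfAlgebra ℂ B] (τ : A →ₗ[ℂ] B →ₗ[ℂ] ℂ) :
    (A ⊗[ℂ] B) →ₗ[ℂ] (A ⊗[ℂ] B) →ₗ[ℂ] ℂ :=
  TensorProduct.curry <|
    LinearMap.mul' ℂ ℂ ∘ₗ
      TensorProduct.map (TensorProduct.lift τ)
        (TensorProduct.lift ((LinearMap.mul ℂ ℂ).compl₁₂
          (Coalgebra.counit : A →ₗ[ℂ] ℂ) (Coalgebra.counit : B →ₗ[ℂ] ℂ))) ∘ₗ
      (tensorTensorTensorComm ℂ A A B B).toLinearMap ∘ₗ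
      TensorProduct.map (TensorProduct.comm ℂ A A).toLinearMap LinearMap.id ∘ₗ
      (tensorTensorTensorComm ℂ A B A B).toLinearMap

/-!
On pure tensors `h = a ⊗ b`, `k = a' ⊗ b'`, `l = a'' ⊗ b''` the counit factors of `σ` collapse,
and both sides of the cocycle identity become `ε(a) ε(b'')` times
`∑ τ(a', b₁) τ(a''₁, b') τ(a''₂, b₂)`: on the left after splitting `τ(a'', b₂ b')` by the second
skew-pairing axiom, on the right after splitting `τ(a' a''₂, b)` by the first. The two sides are
`σ(∑ σ(h₁, k₁) h₂ k₂, l)` and `σ(h, ∑ σ(k₁, l₁) k₂ l₂)`, hence trilinear, so pure tensors suffice.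
-/

open Coalgebra

section Convolution
variable {C : Type} [AddCommGroup C] [Module ℂ C] [Coalgebra ℂ C] {ι κ : Type*}

lemma Coalgebra.Repr.conv_apply {x : C} (r : Repr ℂ x ι) (f g : C →ₗ[ℂ] ℂ) :
    conv f g x = ∑ i ∈ r.index, f (r.left i) * g (r.right i) := by
  simp [conv, ← r.eq]

lemma Coalgebra.Repr.sum_mul_counit {x : C} (r : Repr ℂ x ι) (f : C →ₗ[ℂ] ℂ) :
    ∑ i ∈ r.index, f (r.left i) * counit (r.right i) = f x := by
  have h := congr(LinearMap.mul' ℂ ℂ (_root_.TensorProduct.map f LinearMap.id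
    $(sum_tmul_counit_eq r)))
  simpa only [map_sum, map_tmul, LinearMap.mul'_apply, LinearMap.id_apply, mul_one] using h

lemma Coalgebra.Repr.conv₂_apply {x y : C} (rx : Repr ℂ x ι) (ry : Repr ℂ y κ)
    (f g : C →ₗ[ℂ] C →ₗ[ℂ] ℂ) :
    conv₂ f g x y = ∑ i ∈ rx.index, ∑ j ∈ ry.index,
      f (rx.left i) (ry.left j) * g (rx.right i) (ry.right j) := by
  simp only [conv₂, conv, curry_apply, LinearMap.comp_apply, TensorProduct.comul_tmul, ← rx.eq,
    ← ry.eq, tmul_sum, sum_tmul, map_sum, AlgebraTensorModule.tensorTensorTensorComm_tmul,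
    map_tmul, lift.tmul, LinearMap.mul'_apply]
  exact Finset.sum_comm

end Convolution

section Bialgebra
variable {H : Type} [Ring H] [Bialgebra ℂ H]

-- `leftTwistMul f h k = ∑ f(h₁, k₁) h₂ k₂`
noncomputable def leftTwistMul (f : H →ₗ[ℂ] H →ₗ[ℂ] ℂ) : H →ₗ[ℂ] H →ₗ[ℂ] H :=
  curry (TensorProduct.lid ℂ H ∘ₗ _root_.TensorProduct.map (lift f) (LinearMap.mul' ℂ H) ∘ₗ
    comul)

lemma conv₂_mul_compr₂ (f : H →ₗ[ℂ] H →ₗ[ℂ] ℂ) (φ : H →ₗ[ℂ] ℂ) :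
    conv₂ f ((LinearMap.mul ℂ H).compr₂ φ) = (leftTwistMul f).compr₂ φ := by
  ext h k
  simp only [conv₂, conv, leftTwistMul, curry_apply, LinearMap.compr₂_apply,
    LinearMap.comp_apply, LinearEquiv.coe_coe]
  induction (comul (R := ℂ) (h ⊗ₜ[ℂ] k)) using TensorProduct.induction_on with
  | zero => simp
  | tmul x y => simp [LinearMap.mul', lift_compr₂]
  | add x y hx hy => simp only [map_add, hx, hy]

end Bialgebra

section SkewPairing
variable {A B : Type} [Ring A] [Ring B] [HopfAlgebra ℂ A] [HopfAlgebra ℂ B]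
  (τ : A →ₗ[ℂ] B →ₗ[ℂ] ℂ) {ι κ : Type*}

lemma sigmaOf_tmul (a a' : A) (b b' : B) :
    sigmaOf τ (a ⊗ₜ b) (a' ⊗ₜ b') = counit a * counit b' * τ a' b := by
  simp [sigmaOf, mul_comm]

lemma conv₂_sigmaOf_tmul (g : (A ⊗[ℂ] B) →ₗ[ℂ] (A ⊗[ℂ] B) →ₗ[ℂ] ℂ) (a : A) {a' : A}
    {b : B} (b' : B) (rb : Repr ℂ b ι) (ra' : Repr ℂ a' κ) :
    conv₂ (sigmaOf τ) g (a ⊗ₜ b) (a' ⊗ₜ b') =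
      ∑ j ∈ rb.index, ∑ i ∈ ra'.index,
        τ (ra'.left i) (rb.left j) * g (a ⊗ₜ rb.right j) (ra'.right i ⊗ₜ b') := by
  rw [((ℛ ℂ a).tmul rb).conv₂_apply (ra'.tmul (ℛ ℂ b'))]
  -- Writing `a = ∑ ε(a₁) a₂` and `b' = ∑ ε(b'₁) b'₂` produces the counit factors of `σ`.
  conv_rhs => rw [← sum_counit_smul (ℛ ℂ a), ← sum_counit_smul (ℛ ℂ b')]
  simp only [Repr.tmul_index, Finset.sum_product, Repr.tmul_left, Repr.tmul_right, sigmaOf_tmul,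
    sum_tmul, tmul_sum, ← smul_tmul', tmul_smul, map_sum, map_smul, LinearMap.sum_apply,
    LinearMap.smul_apply, smul_eq_mul, Finset.mul_sum]
  rw [Finset.sum_comm]
  refine Finset.sum_congr rfl fun j _ => ?_
  rw [Finset.sum_comm]
  refine Finset.sum_congr rfl fun i _ => ?_
  rw [Finset.sum_comm]
  exact Finset.sum_congr rfl fun _ _ => Finset.sum_congr rfl fun _ _ => by ring

lemma sigmaOf_leftTwistMul_tmul (a a' a'' : A) (b b' b'' : B) :
    sigmaOf τ (leftTwistMul (sigmaOf τ) (a ⊗ₜ b) (a' ⊗ₜ b')) (a'' ⊗ₜ b'') =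
      counit a * counit b'' * conv (τ a') (τ a'' ∘ₗ LinearMap.mulRight ℂ b') b := by
  rw [← LinearMap.flip_apply (sigmaOf τ), ← LinearMap.compr₂_apply, ← conv₂_mul_compr₂,
    conv₂_sigmaOf_tmul τ _ a b' (ℛ ℂ b) (ℛ ℂ a'), (ℛ ℂ b).conv_apply, Finset.mul_sum]
  refine Finset.sum_congr rfl fun j _ => ?_
  have collapse := (ℛ ℂ a').sum_mul_counit (τ.flip ((ℛ ℂ b).left j))
  rw [LinearMap.flip_apply] at collapse
  rw [← collapse, Finset.sum_mul, Finset.mul_sum]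
  refine Finset.sum_congr rfl fun i _ => ?_
  simp only [LinearMap.compr₂_apply, LinearMap.mul_apply', Algebra.TensorProduct.tmul_mul_tmul,
    LinearMap.flip_apply, sigmaOf_tmul, Bialgebra.counit_mul, LinearMap.comp_apply,
    LinearMap.mulRight_apply]
  ring

lemma sigmaOf_tmul_leftTwistMul (a a' a'' : A) (b b' b'' : B) :
    sigmaOf τ (a ⊗ₜ b) (leftTwistMul (sigmaOf τ) (a' ⊗ₜ b') (a'' ⊗ₜ b'')) =
      counit a * counit b'' * conv (τ.flip b') (τ.flip b ∘ₗ LinearMap.mulLeft ℂ a') a'' := by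
  rw [← LinearMap.compr₂_apply, ← conv₂_mul_compr₂,
    conv₂_sigmaOf_tmul τ _ a' b'' (ℛ ℂ b') (ℛ ℂ a''), (ℛ ℂ a'').conv_apply, Finset.sum_comm,
    Finset.mul_sum]
  refine Finset.sum_congr rfl fun m _ => ?_
  rw [LinearMap.flip_apply, ← (ℛ ℂ b').sum_mul_counit (τ _), Finset.sum_mul,
    Finset.mul_sum]
  refine Finset.sum_congr rfl fun j _ => ?_
  simp only [LinearMap.compr₂_apply, LinearMap.mul_apply', Algebra.TensorProduct.tmul_mul_tmul,
    LinearMap.flip_apply, sigmaOf_tmul, Bialgebra.counit_mul, LinearMap.comp_apply,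
    LinearMap.mulLeft_apply]
  ring

lemma conv_comp_mulRight_eq_conv_comp_mulLeft
    (h1 : ∀ (a a' : A) (b : B), τ (a * a') b = conv (τ a) (τ a') b)
    (h2 : ∀ (a : A) (b b' : B), τ a (b * b') = conv (τ.flip b') (τ.flip b) a)
    (a a' : A) (b b' : B) :
    conv (τ a) (τ a' ∘ₗ LinearMap.mulRight ℂ b') b =
      conv (τ.flip b') (τ.flip b ∘ₗ LinearMap.mulLeft ℂ a) a' := by
  simp only [(ℛ ℂ b).conv_apply, (ℛ ℂ a').conv_apply, LinearMap.comp_apply,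
    LinearMap.mulRight_apply, LinearMap.mulLeft_apply, LinearMap.flip_apply, h1, h2,
    Finset.mul_sum]
  rw [Finset.sum_comm]
  exact Finset.sum_congr rfl fun _ _ => Finset.sum_congr rfl fun _ _ => by ring

lemma sigmaOf_cocycle
    (h1 : ∀ (a a' : A) (b : B), τ (a * a') b = conv (τ a) (τ a') b)
    (h2 : ∀ (a : A) (b b' : B), τ a (b * b') = conv (τ.flip b') (τ.flip b) a)
    (h k l : A ⊗[ℂ] B) :
    sigmaOf τ (leftTwistMul (sigmaOf τ) h k) l =
      sigmaOf τ h (leftTwistMul (sigmaOf τ) k l) := by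
  induction h using TensorProduct.induction_on with
  | zero => simp
  | add x y hx hy => simp only [map_add, LinearMap.add_apply, hx, hy]
  | tmul a b =>
    induction k using TensorProduct.induction_on with
    | zero => simp
    | add x y hx hy => simp only [map_add, LinearMap.add_apply, hx, hy]
    | tmul a' b' =>
      induction l using TensorProduct.induction_on with
      | zero => simp
      | add x y hx hy => simp only [map_add, hx, hy]
      | tmul a'' b'' =>
        rw [sigmaOf_leftTwistMul_tmul, sigmaOf_tmul_leftTwistMul,
          conv_comp_mulRight_eq_conv_comp_mulLeft τ h1 h2]

lemma sigmaOf_flip_one (h4 : ∀ b : B, τ 1 b = counit b) :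
    (sigmaOf τ).flip 1 = counit := by
  ext a b
  simp [Algebra.TensorProduct.one_def, sigmaOf_tmul, h4, mul_comm]

lemma sigmaOf_one (h3 : ∀ a : A, τ a 1 = counit a) : sigmaOf τ 1 = counit := by
  ext a b
  simp [Algebra.TensorProduct.one_def, sigmaOf_tmul, h3, mul_comm]

end SkewPairing

/-- if `τ` is a skew pairing of Hopf algebras `A, B` over `ℂ`, then
`σ(a⊗b, a'⊗b') = ε(a)ε(b')τ(a',b)` is a normalised 2-cocycle for the tensor
product Hopf algebra `H = A ⊗ B`:
`∑ σ(h₍₁₎,k₍₁₎) σ(h₍₂₎k₍₂₎, l) = ∑ σ(k₍₁₎,l₍₁₎) σ(h, k₍₂₎l₍₂₎)` and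
`σ(h,1) = σ(1,h) = ε(h)`. -/
theorem stmt4 {A B : Type} [Ring A] [Ring B] [HopfAlgebra ℂ A] [HopfAlgebra ℂ B]
    (τ : A →ₗ[ℂ] B →ₗ[ℂ] ℂ)
    (h1 : ∀ (a a' : A) (b : B), τ (a * a') b = conv (τ a) (τ a') b)
    (h2 : ∀ (a : A) (b b' : B), τ a (b * b') = conv (τ.flip b') (τ.flip b) a)
    (h3 : ∀ a : A, τ a 1 = Coalgebra.counit a)
    (h4 : ∀ b : B, τ 1 b = Coalgebra.counit b) :
    (∀ h k l : A ⊗[ℂ] B,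
      conv₂ (sigmaOf τ)
        ((LinearMap.mul ℂ (A ⊗[ℂ] B)).compr₂ ((sigmaOf τ).flip l)) h k
      = conv₂ (sigmaOf τ)
        ((LinearMap.mul ℂ (A ⊗[ℂ] B)).compr₂ (sigmaOf τ h)) k l) ∧
    (∀ h : A ⊗[ℂ] B,
      sigmaOf τ h 1 = Coalgebra.counit h ∧ sigmaOf τ 1 h = Coalgebra.counit h) := by
  refine ⟨fun h k l => ?_, fun h => ⟨?_, ?_⟩⟩
  · rw [conv₂_mul_compr₂, conv₂_mul_compr₂]
    exact sigmaOf_cocycle τ h1 h2 h k l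
  · exact LinearMap.congr_fun (sigmaOf_flip_one τ h4) h
  · exact LinearMap.congr_fun (sigmaOf_one τ h3) h
end

section
/- Let H be a finite-dimensional semisimple complex Hopf algebra, ℓ ∈ H an integral with S(ℓ) = ℓ. Then the two-fold coproduct of ℓ is invariant under cyclic permutation: ℓ_(1) ⊗ ℓ_(2) ⊗ ℓ_(3) = ℓ_(3) ⊗ ℓ_(1) ⊗ ℓ_(2), assuming the identities λ(h_(1)) h_(2) = λ(h)·1 for a dual integral λ ∈ H^* with λ(ℓ)=1 and the reconstruction identity h = λ(h ℓ_(1)) S(ℓ_(2)) for all h ∈ H. -/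
/-!
Write `Δℓ = ∑ ℓ₍₁₎ ⊗ ℓ₍₂₎`. The reconstruction identity says that `(λ(- ℓ₍₁₎), S ℓ₍₂₎)` is a
dual basis for `H`, so the pairing `λ(a b)` is nondegenerate, and computing traces with it gives
`tr L_a = ε(ℓ) λ(a) = tr R_a`. As `S` conjugates `R_a` into `L_{S a}` when `S² = id`, and
`ε(ℓ) λ(1) = tr id = dim H ≠ 0`, this forces `λ ∘ S = λ`. That makes the dual basis symmetric in
`ℓ₍₁₎` and `ℓ₍₂₎`, so `Δℓ` is cocommutative, and for a cocommutative element coassociativity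
turns the cyclic permutation of `ℓ₍₁₎ ⊗ ℓ₍₂₎ ⊗ ℓ₍₃₎` into the identity.
-/

open TensorProduct

namespace LinearMap

variable {k V : Type*} [Field k] [AddCommGroup V] [Module k V] [FiniteDimensional k V]

theorem trace_eq_sum_of_forall_sum_smul_eq {ι : Type*} (s : Finset ι) (c : ι → Module.Dual k V)
    (w : ι → V) (hcw : ∀ v, ∑ i ∈ s, c i v • w i = v) (f : V →ₗ[k] V) :
    trace k V f = ∑ i ∈ s, c i (f (w i)) := by
  have hf : f = ∑ i ∈ s, (c i).smulRight (f (w i)) := by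
    ext v
    conv_lhs => rw [← hcw v]
    simp
  calc trace k V f = trace k V (∑ i ∈ s, (c i).smulRight (f (w i))) := congrArg _ hf
    _ = ∑ i ∈ s, c i (f (w i)) := by simp

end LinearMap

section Frobenius

variable {k A : Type*} [Field k] [Ring A] [Algebra k A] (lam : A →ₗ[k] k)

theorem injective_pairing_of_forall_sum_smul_eq {ι : Type*} {s : Finset ι} {x w : ι → A}
    (hdual : ∀ a, ∑ i ∈ s, lam (a * x i) • w i = a) :
    Function.Injective ((LinearMap.mul k A).compr₂ lam) := by
  rw [← LinearMap.ker_eq_bot, LinearMap.ker_eq_bot']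
  intro u hu
  rw [← hdual u]
  simp [show ∀ v, lam (u * v) = 0 from fun v ↦ LinearMap.congr_fun hu v]

variable [FiniteDimensional k A]

theorem trace_mulLeft_eq_of_forall_sum_smul_eq {ι : Type*} {s : Finset ι} {x w : ι → A}
    (hdual : ∀ a, ∑ i ∈ s, lam (a * x i) • w i = a) (a : A) :
    LinearMap.trace k A (LinearMap.mulLeft k a) = lam (a * ∑ i ∈ s, w i * x i) := by
  rw [LinearMap.trace_eq_sum_of_forall_sum_smul_eq s (fun i ↦ lam ∘ₗ LinearMap.mulRight k (x i))
    w hdual, Finset.mul_sum, map_sum]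
  simp [mul_assoc]

variable {lam}

theorem surjective_pairing (hnd : Function.Injective ((LinearMap.mul k A).compr₂ lam)) :
    Function.Surjective ((LinearMap.mul k A).compr₂ lam) :=
  (LinearMap.injective_iff_surjective_of_finrank_eq_finrank Subspace.dual_finrank_eq.symm).mp hnd

/-- The pairing `(u, v) ↦ λ (u * v)` identifies `A` with its dual, and transports right
multiplication by `a` to the transpose of left multiplication by `a`. -/
theorem trace_mulRight_eq_trace_mulLeft
    (hnd : Function.Injective ((LinearMap.mul k A).compr₂ lam)) (a : A) :
    LinearMap.trace k A (LinearMap.mulRight k a) = LinearMap.trace k A (LinearMap.mulLeft k a) := by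
  let e := LinearEquiv.ofBijective _ ⟨hnd, surjective_pairing hnd⟩
  have he : e.conj (LinearMap.mulRight k a) = Module.Dual.transpose (LinearMap.mulLeft k a) := by
    ext φ v
    obtain ⟨u, rfl⟩ := e.surjective φ
    simp only [e, LinearEquiv.conj_apply, LinearMap.comp_apply, LinearEquiv.coe_coe,
      LinearEquiv.symm_apply_apply, Module.Dual.transpose_apply]
    exact congrArg lam (mul_assoc u a v)
  rw [← LinearMap.trace_conj' _ e, he, LinearMap.trace_transpose']

theorem eq_zero_of_forall_pairing_eq_zero
    (hnd : Function.Injective ((LinearMap.mul k A).compr₂ lam)) {d : A}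
    (hd : ∀ c, lam (c * d) = 0) : d = 0 := by
  refine (Module.forall_dual_apply_eq_zero_iff k d).mp fun φ ↦ ?_
  obtain ⟨c, rfl⟩ := surjective_pairing hnd φ
  simpa using hd c

/-- Right nondegeneracy of `λ (a * b)`, which finite dimension gives from the left one, reduces
this to `hdual`. -/
theorem sum_pairing_smul_eq_of_forall_sum_smul_eq {ι : Type*} {s : Finset ι} {x w : ι → A}
    (hdual : ∀ a, ∑ i ∈ s, lam (a * x i) • w i = a) (a : A) :
    ∑ i ∈ s, lam (w i * a) • x i = a := by
  rw [← sub_eq_zero]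
  refine eq_zero_of_forall_pairing_eq_zero (injective_pairing_of_forall_sum_smul_eq lam hdual)
    fun c ↦ ?_
  have hc : lam (c * a) = ∑ i ∈ s, lam (c * x i) * lam (w i * a) := by
    conv_lhs => rw [← hdual c]
    simp [Finset.sum_mul]
  simp [mul_sub, Finset.mul_sum, hc, mul_comm]

end Frobenius

namespace HopfAlgebra

open Coalgebra

theorem sum_antipode_right_mul_left {R A : Type*} [CommSemiring R] [Semiring A] [HopfAlgebra R A]
    (hS : ∀ a : A, antipode R (antipode R a) = a) {a : A} {ι : Type*} (r : Repr R a ι) :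
    ∑ i ∈ r.index, antipode R (r.right i) * r.left i = counit (R := R) a • 1 := by
  have h := congrArg (antipode R) (sum_antipode_mul_eq_smul r)
  simpa [map_sum, antipode_mul_antidistrib, hS] using h

variable {k H : Type*} [Field k] [Ring H] [HopfAlgebra k H] [FiniteDimensional k H]
  (hS : ∀ h : H, antipode k (antipode k h) = h) {lam : H →ₗ[k] k} {l : H} {ι : Type*}
  {r : Repr k l ι}
  (hrec : ∀ h, ∑ i ∈ r.index, lam (h * r.left i) • antipode k (r.right i) = h)
include hS hrec

theorem trace_mulLeft_eq_counit_mul (a : H) :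
    LinearMap.trace k H (LinearMap.mulLeft k a) = counit l * lam a := by
  rw [trace_mulLeft_eq_of_forall_sum_smul_eq lam hrec, sum_antipode_right_mul_left hS,
    mul_smul_comm, mul_one, map_smul, smul_eq_mul]

/-- `tr L_1 = dim H ≠ 0`. -/
theorem counit_ne_zero_of_charZero [CharZero k] : counit (R := k) l ≠ 0 := by
  have : Nontrivial H := Bialgebra.nontrivial k
  have h := trace_mulLeft_eq_counit_mul hS hrec 1
  rw [LinearMap.mulLeft_one, LinearMap.trace_id] at h
  exact left_ne_zero_of_mul (h ▸ Nat.cast_ne_zero.mpr Module.finrank_pos.ne')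

/-- `L_{S a} = S ∘ R_a ∘ S`, so its trace equals that of `R_a`, which equals that of `L_a`. -/
theorem lam_antipode [CharZero k] (a : H) : lam (antipode k a) = lam a := by
  have hconj : LinearMap.mulLeft k (antipode k a) =
      antipode k ∘ₗ LinearMap.mulRight k a ∘ₗ antipode k := by
    ext v
    simp [antipode_mul_antidistrib, hS]
  have htr : LinearMap.trace k H (LinearMap.mulLeft k (antipode k a)) =
      LinearMap.trace k H (LinearMap.mulLeft k a) := by
    rw [hconj, LinearMap.trace_comp_comm', LinearMap.comp_assoc,
      show antipode k ∘ₗ antipode k = (LinearMap.id : H →ₗ[k] H) from LinearMap.ext hS,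
      LinearMap.comp_id, trace_mulRight_eq_trace_mulLeft
        (injective_pairing_of_forall_sum_smul_eq lam hrec)]
  rw [trace_mulLeft_eq_counit_mul hS hrec, trace_mulLeft_eq_counit_mul hS hrec] at htr
  exact mul_left_cancel₀ (counit_ne_zero_of_charZero hS hrec) htr

theorem sum_lam_mul_right_smul_left [CharZero k] (a : H) :
    ∑ i ∈ r.index, lam (a * r.right i) • r.left i = antipode k a := by
  conv_rhs => rw [← sum_pairing_smul_eq_of_forall_sum_smul_eq hrec (antipode k a)]
  refine Finset.sum_congr rfl fun i _ ↦ ?_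
  rw [← antipode_mul_antidistrib, lam_antipode hS hrec]

/-- Expanding the first leg of `∑ ℓ₍₂₎ ⊗ ℓ₍₁₎` in the dual basis `(ℓ₍₁₎, λ(S ℓ₍₂₎ ⬝ -))`
and contracting with `sum_lam_mul_right_smul_left` gives back `∑ ℓ₍₁₎ ⊗ ℓ₍₂₎`. -/
theorem comm_comul_eq_comul [CharZero k] : TensorProduct.comm k H H (comul l) = comul l := by
  have hexp := sum_pairing_smul_eq_of_forall_sum_smul_eq hrec
  calc TensorProduct.comm k H H (comul l)
      = ∑ j ∈ r.index, r.right j ⊗ₜ[k] r.left j := by simp [← r.eq]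
    _ = ∑ j ∈ r.index, (∑ i ∈ r.index, lam (antipode k (r.right i) * r.right j) • r.left i)
          ⊗ₜ[k] r.left j := by simp only [hexp]
    _ = ∑ i ∈ r.index, r.left i ⊗ₜ[k]
          ∑ j ∈ r.index, lam (antipode k (r.right i) * r.right j) • r.left j := by
        simp only [TensorProduct.sum_tmul, TensorProduct.tmul_sum, TensorProduct.smul_tmul]
        exact Finset.sum_comm
    _ = comul l := by simp [sum_lam_mul_right_smul_left hS hrec, hS, r.eq]

end HopfAlgebra

theorem Coalgebra.map_comul_comul_eq_cyclic_of_comm_comul {R C : Type*} [CommSemiring R]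
    [AddCommMonoid C] [Module R C] [Coalgebra R C] {c : C}
    (hc : TensorProduct.comm R C C (comul c) = comul c) :
    map comul LinearMap.id (comul c) =
      (_root_.TensorProduct.assoc R C C C).symm (_root_.TensorProduct.comm R (C ⊗[R] C) C
        (map comul LinearMap.id (comul c))) := by
  have h : _root_.TensorProduct.comm R (C ⊗[R] C) C (map comul LinearMap.id (comul c)) =
      comul.lTensor C (comul c) := by
    conv_rhs => rw [← hc, LinearMap.lTensor_comm]
    rfl
  rw [h, coassoc_symm_apply]
  rfl

theorem stmt8_general {H : Type} [Ring H] [HopfAlgebra ℂ H]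
    [FiniteDimensional ℂ H]
    (hS2 : ∀ h : H, HopfAlgebra.antipode (R := ℂ) (HopfAlgebra.antipode (R := ℂ) h) = h)
    (l : H)
    (lam : H →ₗ[ℂ] ℂ)
    (hrec : ∀ h : H,
      (TensorProduct.lid ℂ H)
        (TensorProduct.map (lam ∘ₗ LinearMap.mulLeft ℂ h)
          (HopfAlgebra.antipode (R := ℂ)) (Coalgebra.comul (R := ℂ) l)) = h) :
    (TensorProduct.map (Coalgebra.comul (R := ℂ)) LinearMap.id)
        (Coalgebra.comul (R := ℂ) l)
      = ((TensorProduct.assoc ℂ H H H).symm.toLinearMap ∘ₗ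
          (TensorProduct.comm ℂ (H ⊗[ℂ] H) H).toLinearMap)
          ((TensorProduct.map (Coalgebra.comul (R := ℂ)) LinearMap.id)
            (Coalgebra.comul (R := ℂ) l)) := by
  let r := Coalgebra.Repr.arbitrary ℂ l
  have hrec' (h : H) :
      ∑ i ∈ r.index, lam (h * r.left i) • HopfAlgebra.antipode ℂ (r.right i) = h := by
    simpa [← r.eq, map_sum] using hrec h
  exact Coalgebra.map_comul_comul_eq_cyclic_of_comm_comul
    (HopfAlgebra.comm_comul_eq_comul hS2 hrec')

/-- for a finite-dimensional semisimple complex Hopf algebra `H`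
with involutive antipode, an integral `ℓ ∈ H` with `S(ℓ) = ℓ`, a dual integral
`λ ∈ H^*` satisfying `∑ λ(h₍₁₎) h₍₂₎ = λ(h)·1` and `λ(ℓ) = 1`, and the
reconstruction identity `h = ∑ λ(h ℓ₍₁₎) S(ℓ₍₂₎)`, the two-fold coproduct of `ℓ`
is invariant under cyclic permutation: `ℓ₍₁₎ ⊗ ℓ₍₂₎ ⊗ ℓ₍₃₎ = ℓ₍₃₎ ⊗ ℓ₍₁₎ ⊗ ℓ₍₂₎`. -/
theorem stmt8 {H : Type} [Ring H] [HopfAlgebra ℂ H]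
    [FiniteDimensional ℂ H] [IsSemisimpleRing H]
    (hS2 : ∀ h : H, HopfAlgebra.antipode (R := ℂ) (HopfAlgebra.antipode (R := ℂ) h) = h)
    (l : H)
    (hl : ∀ h : H, h * l = Coalgebra.counit (R := ℂ) h • l ∧
      l * h = Coalgebra.counit (R := ℂ) h • l)
    (hSl : HopfAlgebra.antipode (R := ℂ) l = l)
    (lam : H →ₗ[ℂ] ℂ)
    (hlam : ∀ h : H,
      (TensorProduct.lid ℂ H)
        (TensorProduct.map lam LinearMap.id (Coalgebra.comul (R := ℂ) h)) = lam h • 1)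
    (hlaml : lam l = 1)
    (hrec : ∀ h : H,
      (TensorProduct.lid ℂ H)
        (TensorProduct.map (lam ∘ₗ LinearMap.mulLeft ℂ h)
          (HopfAlgebra.antipode (R := ℂ)) (Coalgebra.comul (R := ℂ) l)) = h) :
    (TensorProduct.map (Coalgebra.comul (R := ℂ)) LinearMap.id)
        (Coalgebra.comul (R := ℂ) l)
      = ((TensorProduct.assoc ℂ H H H).symm.toLinearMap ∘ₗ
          (TensorProduct.comm ℂ (H ⊗[ℂ] H) H).toLinearMap)
          ((TensorProduct.map (Coalgebra.comul (R := ℂ)) LinearMap.id)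
            (Coalgebra.comul (R := ℂ) l)) :=
  stmt8_general hS2 l lam hrec
end

section
/- Let K be a finite group and M a finite transitive K-set. Define on ℂ^{M×M} ⊗ ℂ[K] the comultiplication Δ(δ_m ⊗ δ_n ⊗ k) = Σ_{p ∈ M} (δ_m ⊗ δ_p ⊗ k) ⊗ (δ_p ⊗ δ_n ⊗ k) and counit ε(δ_m ⊗ δ_n ⊗ k) = δ_m(n). Then (ℂ^{M×M} ⊗ ℂ[K], Δ, ε) is a coassociative counital coalgebra, and Δ is multiplicative: Δ(x·y) = Δ(x)·Δ(y) for all x, y, where the multiplication is (δ_m ⊗ δ_n ⊗ h)·(δ_p ⊗ δ_q ⊗ k) = δ_m(h▷p) δ_n(h▷q) · (δ_m ⊗ δ_n ⊗ hk). -/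
namespace Stmt12

variable {K M : Type} [Group K] [Fintype K] [Fintype M] [MulAction K M]
  [DecidableEq M] [DecidableEq K]

/-- The basis element `δ_m ⊗ δ_n ⊗ h` of `ℂ^{M×M} ⊗ ℂ[K]` (function model). -/
def delta (m n : M) (h : K) : M × M × K → ℂ :=
  fun t => if t = (m, n, h) then 1 else 0

/-- The multiplication of `ℂ^{M×M} ⋊ ℂ[K]`. -/
noncomputable def wmul (f g : M × M × K → ℂ) : M × M × K → ℂ :=
  fun t => ∑ h : K, f (t.1, t.2.1, h) * g (h⁻¹ • t.1, h⁻¹ • t.2.1, h⁻¹ * t.2.2)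

/-- The comultiplication `Δ(δ_m ⊗ δ_n ⊗ k) = ∑_p (δ_m ⊗ δ_p ⊗ k) ⊗ (δ_p ⊗ δ_n ⊗ k)`,
in the function model where `H ⊗ H` is identified with functions of two variables. -/
def comul (f : M × M × K → ℂ) : M × M × K → M × M × K → ℂ :=
  fun x y => if x.2.2 = y.2.2 ∧ x.2.1 = y.1 then f (x.1, y.2.1, x.2.2) else 0

/-- The counit `ε(δ_m ⊗ δ_n ⊗ k) = δ_m(n)`. -/
noncomputable def counit (f : M × M × K → ℂ) : ℂ :=
  ∑ m : M, ∑ k : K, f (m, m, k)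

/-- The componentwise multiplication of `H ⊗ H` in the function model. -/
noncomputable def t2mul (u v : M × M × K → M × M × K → ℂ) :
    M × M × K → M × M × K → ℂ :=
  fun x y => ∑ h : K, ∑ h' : K,
    u (x.1, x.2.1, h) (y.1, y.2.1, h') *
      v (h⁻¹ • x.1, h⁻¹ • x.2.1, h⁻¹ * x.2.2) (h'⁻¹ • y.1, h'⁻¹ • y.2.1, h'⁻¹ * y.2.2)

/-- `(ℂ^{M×M} ⊗ ℂ[K], Δ, ε)` is a coassociative counital coalgebra
and `Δ` is multiplicative for the semidirect product multiplication. -/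
theorem stmt12 (htrans : MulAction.IsPretransitive K M) :
    (∀ (m n : M) (k : K) (x y : M × M × K),
      comul (delta m n k) x y = ∑ p : M, delta m p k x * delta p n k y) ∧
    (∀ (f : M × M × K → ℂ) (x y z : M × M × K),
      comul (fun w => comul f w z) x y = comul (fun w => comul f x w) y z) ∧
    (∀ (f : M × M × K → ℂ) (y : M × M × K),
      (∑ m : M, ∑ k : K, comul f (m, m, k) y) = f y) ∧
    (∀ (f : M × M × K → ℂ) (x : M × M × K),
      (∑ m : M, ∑ k : K, comul f x (m, m, k)) = f x) ∧
    (∀ f g : M × M × K → ℂ, comul (wmul f g) = t2mul (comul f) (comul g)) := by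
  refine ⟨?_, ?_, ?_, ?_, ?_⟩
  · rintro m n k ⟨x1, x2, x3⟩ ⟨y1, y2, y3⟩
    simp only [comul, delta, Prod.mk.injEq, mul_ite, mul_one, mul_zero, ite_mul, one_mul,
      zero_mul]
    rw [Finset.sum_eq_single y1]
    · split_ifs <;> simp_all <;> aesop
    · intro p _ hp; simp [Ne.symm hp]
    · simp
  · rintro f ⟨x1, x2, x3⟩ ⟨y1, y2, y3⟩ ⟨z1, z2, z3⟩
    simp only [comul]
    split_ifs <;> simp_all <;> tauto
  · rintro f ⟨y1, y2, y3⟩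
    simp only [comul]
    rw [Finset.sum_comm]
    rw [Finset.sum_eq_single y3]
    · rw [Finset.sum_eq_single y1] <;> simp_all
    · intro k _ hk; apply Finset.sum_eq_zero; intro m _; simp [hk]
    · simp
  · rintro f ⟨x1, x2, x3⟩
    simp only [comul]
    rw [Finset.sum_eq_single x2]
    · rw [Finset.sum_eq_single x3]
      · simp
      · intro k _ hk; exact if_neg (fun hc => hk hc.1.symm)
      · simp
    · intro m _ hm; apply Finset.sum_eq_zero; intro k _
      exact if_neg (fun hc => hm hc.2.symm)
    · simp
  · intro f g
    funext x y
    obtain ⟨x1, x2, x3⟩ := x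
    obtain ⟨y1, y2, y3⟩ := y
    simp only [comul, t2mul, wmul]
    have hinner : ∀ h : K, (∑ h' : K,
        (if h = h' ∧ x2 = y1 then f (x1, y2, h) else 0) *
          (if h⁻¹ * x3 = h'⁻¹ * y3 ∧ h⁻¹ • x2 = h'⁻¹ • y1 then
            g (h⁻¹ • x1, h'⁻¹ • y2, h⁻¹ * x3) else 0)) =
        if x3 = y3 ∧ x2 = y1 then
          f (x1, y2, h) * g (h⁻¹ • x1, h⁻¹ • y2, h⁻¹ * x3) else 0 := by
      intro h
      rw [Finset.sum_eq_single h]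
      · split_ifs with h1 h2 h3 <;> simp_all
      · intro h' _ hne
        rw [if_neg (fun hc => hne hc.1.symm), zero_mul]
      · simp
    simp only [hinner]
    split_ifs with h1
    · rfl
    · simp

end Stmt12
end

section
/- Let K be a finite group and M a finite transitive K-set, and let H = ℂ^{M×M} ⊗ ℂ[K] with multiplication (δ_m ⊗ δ_n ⊗ h)·(δ_p ⊗ δ_q ⊗ k) = δ_m(h▷p) δ_n(h▷q) (δ_m ⊗ δ_n ⊗ hk), unit 1 = Σ_{m,n} δ_m ⊗ δ_n ⊗ e, comultiplication Δ(δ_m ⊗ δ_n ⊗ k) = Σ_p (δ_m ⊗ δ_p ⊗ k) ⊗ (δ_p ⊗ δ_n ⊗ k) and counit ε(δ_m ⊗ δ_n ⊗ k) = δ_m(n). Then the weak Hopf algebra unit axioms hold: (Δ ⊗ id)(Δ(1)) = (Δ(1) ⊗ 1)·(1 ⊗ Δ(1)) = (1 ⊗ Δ(1))·(Δ(1) ⊗ 1), and ε(g h k) = ε(g h_(1)) ε(h_(2) k) = ε(g h_(2)) ε(h_(1) k) for all g, h, k ∈ H. -/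
namespace Stmt13

set_option linter.unusedSectionVars false
set_option maxHeartbeats 1000000

variable {K M : Type} [Group K] [Fintype K] [Fintype M] [MulAction K M]
  [DecidableEq M] [DecidableEq K]

/-- The basis element `δ_x` of `ℂ^{M×M} ⊗ ℂ[K]` (function model). -/
def deltaP (x : M × M × K) : M × M × K → ℂ :=
  fun t => if t = x then 1 else 0

/-- The multiplication of `ℂ^{M×M} ⋊ ℂ[K]`. -/
noncomputable def wmul (f g : M × M × K → ℂ) : M × M × K → ℂ :=
  fun t => ∑ h : K, f (t.1, t.2.1, h) * g (h⁻¹ • t.1, h⁻¹ • t.2.1, h⁻¹ * t.2.2)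

/-- The unit `1 = ∑_{m,n} δ_m ⊗ δ_n ⊗ e`. -/
def wone : M × M × K → ℂ :=
  fun t => if t.2.2 = 1 then 1 else 0

/-- The comultiplication of `ℂ^{M×M} ⋊ ℂ[K]` (function model of `H ⊗ H`). -/
def comul (f : M × M × K → ℂ) : M × M × K → M × M × K → ℂ :=
  fun x y => if x.2.2 = y.2.2 ∧ x.2.1 = y.1 then f (x.1, y.2.1, x.2.2) else 0

/-- The counit `ε(δ_m ⊗ δ_n ⊗ k) = δ_m(n)`. -/
noncomputable def counit (f : M × M × K → ℂ) : ℂ :=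
  ∑ m : M, ∑ k : K, f (m, m, k)

/-- The componentwise multiplication of `H ⊗ H ⊗ H` in the function model. -/
noncomputable def t3mul (u v : M × M × K → M × M × K → M × M × K → ℂ) :
    M × M × K → M × M × K → M × M × K → ℂ :=
  fun x y z => ∑ h₁ : K, ∑ h₂ : K, ∑ h₃ : K,
    u (x.1, x.2.1, h₁) (y.1, y.2.1, h₂) (z.1, z.2.1, h₃) *
      v (h₁⁻¹ • x.1, h₁⁻¹ • x.2.1, h₁⁻¹ * x.2.2)
        (h₂⁻¹ • y.1, h₂⁻¹ • y.2.1, h₂⁻¹ * y.2.2)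
        (h₃⁻¹ • z.1, h₃⁻¹ • z.2.1, h₃⁻¹ * z.2.2)

lemma t3mul_eq_sum (u v : M × M × K → M × M × K → M × M × K → ℂ) (x y z : M × M × K) :
    t3mul u v x y z = ∑ p : K × K × K,
    u (x.1, x.2.1, p.1) (y.1, y.2.1, p.2.1) (z.1, z.2.1, p.2.2) *
      v (p.1⁻¹ • x.1, p.1⁻¹ • x.2.1, p.1⁻¹ * x.2.2)
        (p.2.1⁻¹ • y.1, p.2.1⁻¹ • y.2.1, p.2.1⁻¹ * y.2.2)
        (p.2.2⁻¹ • z.1, p.2.2⁻¹ • z.2.1, p.2.2⁻¹ * z.2.2) := by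
  rw [Fintype.sum_prod_type]; simp only [Fintype.sum_prod_type]; rfl

lemma part1a (x y z : M × M × K) :
      comul (fun w => comul (wone (M := M) (K := K)) w z) x y
        = t3mul (fun a b c => comul wone a b * wone c)
            (fun a b c => wone a * comul wone b c) x y z := by
  obtain ⟨x1, x2, x3⟩ := x; obtain ⟨y1, y2, y3⟩ := y; obtain ⟨z1, z2, z3⟩ := z
  rw [t3mul_eq_sum, Fintype.sum_eq_single ((1:K),(1:K),(1:K))]
  · simp only [comul, wone, inv_mul_eq_one, inv_smul_eq_iff, one_smul, one_mul, inv_one]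
    split_ifs <;> norm_num <;> simp_all
  · rintro ⟨h₁, h₂, h₃⟩ hne
    by_cases e1 : h₁ = h₂ ∧ x2 = y1
    · by_cases e2 : h₁ = 1
      · by_cases e3 : h₃ = 1
        · subst e2; subst e3; exact absurd (by rw [← e1.1]) hne
        · simp [comul, wone, e3]
      · simp [comul, wone, e2]
    · simp [comul, wone, e1]

lemma part1b (x y z : M × M × K) :
      comul (fun w => comul (wone (M := M) (K := K)) w z) x y
        = t3mul (fun a b c => wone a * comul wone b c)
            (fun a b c => comul wone a b * wone c) x y z := by
  obtain ⟨x1, x2, x3⟩ := x; obtain ⟨y1, y2, y3⟩ := y; obtain ⟨z1, z2, z3⟩ := z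
  rw [t3mul_eq_sum, Fintype.sum_eq_single ((1:K),(1:K),(1:K))]
  · simp only [comul, wone, inv_mul_eq_one, inv_smul_eq_iff, one_smul, one_mul, inv_one]
    split_ifs <;> norm_num <;> simp_all
  · rintro ⟨h₁, h₂, h₃⟩ hne
    by_cases e1 : h₂ = h₃ ∧ y2 = z1
    · by_cases e2 : h₁ = 1
      · by_cases e3 : h₂ = 1
        · subst e2; subst e3; exact absurd (by rw [← e1.1]) hne
        · simp [comul, wone, e3]
      · simp [comul, wone, e2]
    · simp [comul, wone, e1]

lemma L1 (g : M × M × K → ℂ) (x : M × M × K) :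
    counit (wmul g (deltaP x)) =
      if x.2.1 = x.1 then ∑ h : K, g (h • x.1, h • x.1, h) else 0 := by
  obtain ⟨a, b, s⟩ := x
  simp only [counit, wmul, deltaP, Prod.mk.injEq, ite_and, mul_ite, mul_one, mul_zero,
    inv_smul_eq_iff, inv_mul_eq_iff_eq_mul]
  rw [Finset.sum_congr rfl fun m _ => Finset.sum_comm]
  simp only [Finset.sum_ite_irrel, Finset.sum_const_zero, Finset.sum_ite_eq',
    Finset.mem_univ, if_true, smul_left_cancel_iff]
  rw [Finset.sum_comm]
  simp only [Finset.sum_ite_eq', Finset.mem_univ, if_true, smul_left_cancel_iff,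
    Finset.sum_ite_irrel, Finset.sum_const_zero]
  simp [eq_comm]

lemma L2 (k : M × M × K → ℂ) (y : M × M × K) :
    counit (wmul (deltaP y) k) =
      if y.2.1 = y.1 then ∑ c : K, k (y.2.2⁻¹ • y.1, y.2.2⁻¹ • y.1, y.2.2⁻¹ * c) else 0 := by
  obtain ⟨a, b, s⟩ := y
  simp only [counit, wmul, deltaP, Prod.mk.injEq, ite_and, ite_mul, one_mul, zero_mul]
  simp only [Finset.sum_ite_irrel, Finset.sum_const_zero, Finset.sum_ite_eq',
    Finset.mem_univ, if_true]
  simp [eq_comm]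

def phiE : (M × K × K × K) ≃ (M × K × K × K) where
  toFun p := (p.2.2.2 • p.1, p.2.2.2 * p.2.1, p.2.2.2 * p.2.2.1, p.2.2.2)
  invFun p := (p.2.2.2⁻¹ • p.1, p.2.2.2⁻¹ * p.2.1, p.2.2.2⁻¹ * p.2.2.1, p.2.2.2)
  left_inv p := by obtain ⟨a, c, s, h⟩ := p; simp
  right_inv p := by obtain ⟨a, c, s, h⟩ := p; simp

lemma reindex (F : M → K → K → K → ℂ) :
    (∑ m : M, ∑ k0 : K, ∑ h2 : K, ∑ h1 : K, F m k0 h2 h1)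
      = ∑ a : M, ∑ c : K, ∑ s : K, ∑ h1 : K, F (h1 • a) (h1 * c) (h1 * s) h1 := by
  have := Fintype.sum_equiv (phiE (M := M) (K := K))
    (fun p => F (p.2.2.2 • p.1) (p.2.2.2 * p.2.1) (p.2.2.2 * p.2.2.1) p.2.2.2)
    (fun p => F p.1 p.2.1 p.2.2.1 p.2.2.2) (fun p => rfl)
  simpa only [Fintype.sum_prod_type] using this.symm

lemma lhs_eq (g h k : M × M × K → ℂ) :
    counit (wmul (wmul g h) k)
      = ∑ a : M, ∑ c : K, ∑ s : K, ∑ h1 : K,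
          g (h1 • a, h1 • a, h1) * h (a, a, s) * k (s⁻¹ • a, s⁻¹ • a, s⁻¹ * c) := by
  simp only [counit, wmul, Finset.sum_mul]
  rw [reindex (fun m k0 h2 h1 => g (m, m, h1) * h (h1⁻¹ • m, h1⁻¹ • m, h1⁻¹ * h2)
    * k (h2⁻¹ • m, h2⁻¹ • m, h2⁻¹ * k0))]
  simp [mul_smul, mul_assoc]

lemma rhs_eq (h : M × M × K → ℂ) (G : M → ℂ) (Kk : M → K → ℂ) :
    (∑ x : M × M × K, ∑ y : M × M × K,
        comul h x y * (if x.2.1 = x.1 then G x.1 else 0)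
          * (if y.2.1 = y.1 then Kk y.1 y.2.2 else 0))
      = ∑ a : M, ∑ s : K, h (a, a, s) * G a * Kk a s := by
  simp only [Fintype.sum_prod_type, comul, ite_and, ite_mul, mul_ite, mul_zero, zero_mul,
    mul_one]
  simp only [Finset.sum_ite_irrel, Finset.sum_const_zero, Finset.sum_ite_eq,
    Finset.sum_ite_eq', Finset.mem_univ, if_true]

lemma rhs_eq' (h : M × M × K → ℂ) (G : M → ℂ) (Kk : M → K → ℂ) :
    (∑ x : M × M × K, ∑ y : M × M × K,
        comul h x y * (if y.2.1 = y.1 then G y.1 else 0)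
          * (if x.2.1 = x.1 then Kk x.1 x.2.2 else 0))
      = ∑ a : M, ∑ s : K, h (a, a, s) * G a * Kk a s := by
  simp only [Fintype.sum_prod_type, comul, ite_and, ite_mul, mul_ite, mul_zero, zero_mul,
    mul_one]
  simp only [Finset.sum_ite_irrel, Finset.sum_const_zero, Finset.sum_ite_eq,
    Finset.sum_ite_eq', Finset.mem_univ, if_true]

lemma glue (g h k : M × M × K → ℂ) :
    (∑ a : M, ∑ s : K, h (a, a, s) * (∑ h1 : K, g (h1 • a, h1 • a, h1))
        * (∑ c : K, k (s⁻¹ • a, s⁻¹ • a, s⁻¹ * c)))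
      = ∑ a : M, ∑ c : K, ∑ s : K, ∑ h1 : K,
          g (h1 • a, h1 • a, h1) * h (a, a, s) * k (s⁻¹ • a, s⁻¹ • a, s⁻¹ * c) := by
  refine Finset.sum_congr rfl fun a _ => ?_
  simp only [Finset.mul_sum, Finset.sum_mul]
  rw [Finset.sum_congr rfl fun s _ => Finset.sum_comm]
  rw [Finset.sum_comm]
  rw [Finset.sum_congr rfl fun c _ => Finset.sum_comm]
  rw [Finset.sum_comm]
  rw [Finset.sum_congr rfl fun h1 _ => Finset.sum_comm]
  exact Finset.sum_congr rfl fun c _ => Finset.sum_congr rfl fun s _ =>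
    Finset.sum_congr rfl fun h1 _ => by ring

/-- the weak Hopf algebra unit axioms hold for `ℂ^{M×M} ⋊ ℂ[K]`:
`(Δ ⊗ id)(Δ(1)) = (Δ(1) ⊗ 1)·(1 ⊗ Δ(1)) = (1 ⊗ Δ(1))·(Δ(1) ⊗ 1)` and
`ε(ghk) = ∑ ε(g h₍₁₎) ε(h₍₂₎ k) = ∑ ε(g h₍₂₎) ε(h₍₁₎ k)`. -/
theorem stmt13 (htrans : MulAction.IsPretransitive K M) :
    (∀ x y z : M × M × K,
      comul (fun w => comul (wone (M := M) (K := K)) w z) x y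
        = t3mul (fun a b c => comul wone a b * wone c)
            (fun a b c => wone a * comul wone b c) x y z ∧
      comul (fun w => comul (wone (M := M) (K := K)) w z) x y
        = t3mul (fun a b c => wone a * comul wone b c)
            (fun a b c => comul wone a b * wone c) x y z) ∧
    (∀ g h k : M × M × K → ℂ,
      counit (wmul (wmul g h) k)
        = ∑ x : M × M × K, ∑ y : M × M × K,
            comul h x y * counit (wmul g (deltaP x)) * counit (wmul (deltaP y) k) ∧
      counit (wmul (wmul g h) k)
        = ∑ x : M × M × K, ∑ y : M × M × K,
            comul h x y * counit (wmul g (deltaP y)) * counit (wmul (deltaP x) k)) := by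
  refine ⟨fun x y z => ⟨part1a x y z, part1b x y z⟩, fun g h k => ⟨?_, ?_⟩⟩
  · rw [lhs_eq, ← glue]
    simp only [L1, L2]
    exact (rhs_eq h (fun a => ∑ h1 : K, g (h1 • a, h1 • a, h1))
      (fun a s => ∑ c : K, k (s⁻¹ • a, s⁻¹ • a, s⁻¹ * c))).symm
  · rw [lhs_eq, ← glue]
    simp only [L1, L2]
    exact (rhs_eq' h (fun a => ∑ h1 : K, g (h1 • a, h1 • a, h1))
      (fun a s => ∑ c : K, k (s⁻¹ • a, s⁻¹ • a, s⁻¹ * c))).symm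

end Stmt13
end

section
/- Let K be a finite group, M a finite transitive K-set, and H = ℂ^{M×M} ⊗ ℂ[K] the weak Hopf algebra with structure maps as above and antipode S(δ_m ⊗ δ_n ⊗ k) = δ_{k⁻¹▷n} ⊗ δ_{k⁻¹▷m} ⊗ k⁻¹. Then S is an algebra anti-homomorphism, an involution (S ∘ S = id), and satisfies the weak antipode axioms: m∘(id ⊗ S)∘Δ(h) = (ε ⊗ id)(Δ(1)·(h ⊗ 1)), m∘(S ⊗ id)∘Δ(h) = (id ⊗ ε)((1 ⊗ h)·Δ(1)), and S(h) = S(h_(1)) h_(2) S(h_(3)) for all h ∈ H. -/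
/-!
Everything is computed on the basis `δ_(a,b,g)`. In Sweedler form
`Δ f = ∑_{x,p} f x · δ_(x.1,p,x.2.2) ⊗ δ_(p,x.2.1,x.2.2)`, the antipode maps basis elements to
basis elements, and multiplying by a basis element on the right selects a single group element.
Hence both sides of the first weak antipode axiom collapse to the target counital map `ε_t f`,
both sides of the second to the source counital map `ε_s f`, and in `S(h₁) h₂ S(h₃)` the only
surviving term is the one with group element `k⁻¹`, which is `f (k⁻¹▷n, k⁻¹▷m, k⁻¹) = S f (m,n,k)`.
-/

namespace Stmt14

variable {K M : Type} [Group K] [Fintype K] [Fintype M] [MulAction K M]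
  [DecidableEq M] [DecidableEq K]

/-- The basis element `δ_x` of `ℂ^{M×M} ⊗ ℂ[K]` (function model). -/
def deltaP (x : M × M × K) : M × M × K → ℂ :=
  fun t => if t = x then 1 else 0

/-- The multiplication of `ℂ^{M×M} ⋊ ℂ[K]`. -/
noncomputable def wmul (f g : M × M × K → ℂ) : M × M × K → ℂ :=
  fun t => ∑ h : K, f (t.1, t.2.1, h) * g (h⁻¹ • t.1, h⁻¹ • t.2.1, h⁻¹ * t.2.2)

/-- The unit `1 = ∑_{m,n} δ_m ⊗ δ_n ⊗ e`. -/
def wone : M × M × K → ℂ :=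
  fun t => if t.2.2 = 1 then 1 else 0

/-- The comultiplication of `ℂ^{M×M} ⋊ ℂ[K]` (function model of `H ⊗ H`). -/
def comul (f : M × M × K → ℂ) : M × M × K → M × M × K → ℂ :=
  fun x y => if x.2.2 = y.2.2 ∧ x.2.1 = y.1 then f (x.1, y.2.1, x.2.2) else 0

/-- The counit `ε(δ_m ⊗ δ_n ⊗ k) = δ_m(n)`. -/
noncomputable def counit (f : M × M × K → ℂ) : ℂ :=
  ∑ m : M, ∑ k : K, f (m, m, k)

/-- The componentwise multiplication of `H ⊗ H` in the function model. -/
noncomputable def t2mul (u v : M × M × K → M × M × K → ℂ) :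
    M × M × K → M × M × K → ℂ :=
  fun x y => ∑ h : K, ∑ h' : K,
    u (x.1, x.2.1, h) (y.1, y.2.1, h') *
      v (h⁻¹ • x.1, h⁻¹ • x.2.1, h⁻¹ * x.2.2) (h'⁻¹ • y.1, h'⁻¹ • y.2.1, h'⁻¹ * y.2.2)

/-- The antipode `S(δ_m ⊗ δ_n ⊗ k) = δ_{k⁻¹▷n} ⊗ δ_{k⁻¹▷m} ⊗ k⁻¹`. -/
def wS (f : M × M × K → ℂ) : M × M × K → ℂ :=
  fun t => f (t.2.2⁻¹ • t.2.1, t.2.2⁻¹ • t.1, t.2.2⁻¹)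

omit [Group K] [Fintype K] [Fintype M] [MulAction K M] in
lemma deltaP_apply (a b : M) (g : K) (m n : M) (k : K) :
    deltaP (a, b, g) (m, n, k) = if m = a ∧ n = b ∧ k = g then 1 else 0 := by
  simp [deltaP]

omit [Fintype K] [Fintype M] [DecidableEq M] [DecidableEq K] in
lemma wS_wS (f : M × M × K → ℂ) : wS (wS f) = f := by
  funext ⟨m, n, k⟩
  simp [wS, smul_smul]

omit [Fintype K] [Fintype M] in
lemma wS_deltaP (a b : M) (g : K) :
    wS (deltaP (a, b, g)) = deltaP (g⁻¹ • b, g⁻¹ • a, g⁻¹) := by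
  funext ⟨m, n, k⟩
  simp only [wS, deltaP_apply]
  congr 1
  apply propext
  constructor
  · rintro ⟨rfl, rfl, rfl⟩
    simp
  · rintro ⟨rfl, rfl, rfl⟩
    simp [smul_smul]

omit [Fintype M] [DecidableEq M] [DecidableEq K] in
lemma wS_wmul (f g : M × M × K → ℂ) : wS (wmul f g) = wmul (wS g) (wS f) := by
  funext ⟨m, n, k⟩
  simp only [wS, wmul]
  rw [← Equiv.sum_comp (Equiv.mulLeft k⁻¹)]
  refine Finset.sum_congr rfl fun h _ => ?_
  simp [mul_smul, mul_assoc, mul_comm]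

omit [Fintype M] in
lemma wmul_deltaP_apply (f : M × M × K → ℂ) (c d : M) (g : K) (m n : M) (k : K) :
    wmul f (deltaP (c, d, g)) (m, n, k) =
      if (g * k⁻¹) • m = c ∧ (g * k⁻¹) • n = d then f (m, n, k * g⁻¹) else 0 := by
  simp only [wmul, deltaP_apply, mul_ite, mul_one, mul_zero]
  rw [Fintype.sum_eq_single (k * g⁻¹) fun h hh =>
    if_neg fun ⟨_, _, hk⟩ => hh (eq_mul_inv_of_mul_eq (inv_mul_eq_iff_eq_mul.mp hk).symm)]
  simp

omit [Group K] [MulAction K M] in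
lemma sum_comul_mul (f : M × M × K → ℂ) (G : M × M × K → M × M × K → ℂ) :
    ∑ x, ∑ y, comul f x y * G x y = ∑ x, ∑ p : M, f x * G (x.1, p, x.2.2) (p, x.2.1, x.2.2) := by
  simp only [comul, ite_mul, zero_mul, Fintype.sum_prod_type, ite_and, Finset.sum_ite_irrel,
    Finset.sum_const_zero, Finset.sum_ite_eq, Finset.mem_univ, if_true]
  refine Finset.sum_congr rfl fun a _ => ?_
  rw [Finset.sum_comm_cycle]
  exact Finset.sum_congr rfl fun b _ => Finset.sum_comm

omit [Fintype M] in
lemma t2mul_comul_wone_left (v : M × M × K → M × M × K → ℂ) (x y : M × M × K) :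
    t2mul (comul wone) v x y = if x.2.1 = y.1 then v x y else 0 := by
  obtain ⟨a, b, g⟩ := x
  obtain ⟨c, d, h⟩ := y
  simp only [t2mul, comul, wone]
  split_ifs with hbc <;> simp [hbc]

omit [Fintype M] in
lemma t2mul_comul_wone_right (u : M × M × K → M × M × K → ℂ) (x y : M × M × K) :
    t2mul u (comul wone) x y = if x.2.2⁻¹ • x.2.1 = y.2.2⁻¹ • y.1 then u x y else 0 := by
  obtain ⟨a, b, g⟩ := x
  obtain ⟨c, d, h⟩ := y
  simp only [t2mul, comul, wone]
  rw [Fintype.sum_eq_single g fun g' hg' => Fintype.sum_eq_zero _ fun h' => by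
    simp [inv_mul_eq_one, hg']]
  rw [Fintype.sum_eq_single h fun h' hh' => by
    simp [eq_inv_mul_iff_mul_eq, hh']]
  simp

/-- Closed form of the target counital map `ε_t f = (ε ⊗ id)(Δ(1)·(f ⊗ 1))`. -/
noncomputable def targetCounit (f : M × M × K → ℂ) : M × M × K → ℂ :=
  fun t => if t.2.2 = 1 then ∑ k, f (t.1, t.1, k) else 0

/-- Closed form of the source counital map `ε_s f = (id ⊗ ε)((1 ⊗ f)·Δ(1))`. -/
noncomputable def sourceCounit (f : M × M × K → ℂ) : M × M × K → ℂ :=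
  fun t => if t.2.2 = 1 then ∑ k, f (k • t.2.1, k • t.2.1, k) else 0

lemma sum_comul_mul_wmul_deltaP_wS_deltaP (f : M × M × K → ℂ) (t : M × M × K) :
    ∑ x, ∑ y, comul f x y * wmul (deltaP x) (wS (deltaP y)) t = targetCounit f t := by
  obtain ⟨m, n, k⟩ := t
  rw [sum_comul_mul]
  simp only [Fintype.sum_prod_type, wS_deltaP, wmul_deltaP_apply, deltaP_apply, targetCounit]
  by_cases hk : k = 1 <;> simp [hk, ite_and]

lemma sum_t2mul_comul_wone_eq_targetCounit (f : M × M × K → ℂ) (t : M × M × K) :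
    ∑ m : M, ∑ k : K, t2mul (comul wone) (fun a b => f a * wone b) (m, m, k) t =
      targetCounit f t := by
  simp only [t2mul_comul_wone_left, wone, targetCounit]
  by_cases hk : t.2.2 = 1 <;> simp [hk, Finset.sum_ite_irrel]

lemma sum_comul_mul_wmul_wS_deltaP_deltaP (f : M × M × K → ℂ) (t : M × M × K) :
    ∑ x, ∑ y, comul f x y * wmul (wS (deltaP x)) (deltaP y) t = sourceCounit f t := by
  obtain ⟨m, n, k⟩ := t
  rw [sum_comul_mul]
  simp only [Fintype.sum_prod_type, wS_deltaP, wmul_deltaP_apply, deltaP_apply, sourceCounit]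
  by_cases hk : k = 1
  · simp only [hk, inv_one, mul_one, eq_inv_smul_iff, one_mul, and_true, ite_and, mul_ite,
      mul_zero, Finset.sum_ite_eq, Finset.mem_univ, if_true]
    rw [Finset.sum_comm_cycle]
    simp
  · simp [hk]

lemma sum_t2mul_comul_wone_eq_sourceCounit (f : M × M × K → ℂ) (t : M × M × K) :
    ∑ m : M, ∑ k : K, t2mul (fun a b => wone a * f b) (comul wone) t (m, m, k) =
      sourceCounit f t := by
  simp only [t2mul_comul_wone_right, wone, sourceCounit]
  by_cases hk : t.2.2 = 1
  · simp only [hk, inv_one, one_smul, eq_inv_smul_iff, if_true, one_mul]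
    rw [Finset.sum_comm]
    simp
  · simp [hk]

lemma sum_comul_comul_wmul_wmul_wS_eq_wS (f : M × M × K → ℂ) (t : M × M × K) :
    ∑ x, ∑ y, ∑ z, comul (fun w => comul f w z) x y *
        wmul (wmul (wS (deltaP x)) (deltaP y)) (wS (deltaP z)) t = wS f t := by
  set G : M × M × K → M × M × K → M × M × K → ℂ := fun x y z =>
    wmul (wmul (wS (deltaP x)) (deltaP y)) (wS (deltaP z)) t
  calc ∑ x, ∑ y, ∑ z, comul (fun w => comul f w z) x y * G x y z
      = ∑ z, ∑ w, ∑ p, comul f w z * G (w.1, p, w.2.2) (p, w.2.1, w.2.2) z := by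
        rw [Finset.sum_comm_cycle]
        exact Finset.sum_congr rfl fun z _ => sum_comul_mul _ _
    _ = ∑ w, ∑ z, comul f w z * ∑ p, G (w.1, p, w.2.2) (p, w.2.1, w.2.2) z := by
        rw [Finset.sum_comm]
        simp only [Finset.mul_sum]
    _ = ∑ v, ∑ q, f v * ∑ p, G (v.1, p, v.2.2) (p, q, v.2.2) (q, v.2.1, v.2.2) :=
        sum_comul_mul _ _
    _ = wS f t := by
        obtain ⟨m, n, k⟩ := t
        simp only [G, Fintype.sum_prod_type, wS_deltaP, wmul_deltaP_apply, deltaP_apply]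
        simp only [mul_smul, smul_left_cancel_iff, inv_inv, mul_inv_rev, mul_inv_cancel_left,
          mul_inv_cancel_right, ite_and, Finset.sum_ite_irrel, Finset.sum_ite_eq, Finset.mem_univ,
          if_true, Finset.sum_const_zero, mul_ite, mul_one, mul_zero]
        rw [Finset.sum_comm, Fintype.sum_eq_single k⁻¹ fun g hg => Fintype.sum_eq_zero _ fun a => by
          simp [show k ≠ g⁻¹ from fun h => hg (by rw [h, inv_inv])]]
        simp [wS, eq_comm (a := n), ← eq_inv_smul_iff]

theorem stmt14_general :
    (∀ f g : M × M × K → ℂ, wS (wmul f g) = wmul (wS g) (wS f)) ∧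
    (∀ f : M × M × K → ℂ, wS (wS f) = f) ∧
    (∀ (f : M × M × K → ℂ) (t : M × M × K),
      (∑ x : M × M × K, ∑ y : M × M × K,
          comul f x y * wmul (deltaP x) (wS (deltaP y)) t)
        = ∑ m : M, ∑ k : K,
            t2mul (comul (wone (M := M) (K := K)))
              (fun a b => f a * wone b) (m, m, k) t) ∧
    (∀ (f : M × M × K → ℂ) (t : M × M × K),
      (∑ x : M × M × K, ∑ y : M × M × K,
          comul f x y * wmul (wS (deltaP x)) (deltaP y) t)
        = ∑ m : M, ∑ k : K,
            t2mul (fun a b => wone a * f b)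
              (comul (wone (M := M) (K := K))) t (m, m, k)) ∧
    (∀ (f : M × M × K → ℂ) (t : M × M × K),
      wS f t
        = ∑ x : M × M × K, ∑ y : M × M × K, ∑ z : M × M × K,
            comul (fun w => comul f w z) x y *
              wmul (wmul (wS (deltaP x)) (deltaP y)) (wS (deltaP z)) t) :=
  ⟨wS_wmul, wS_wS,
    fun f t => (sum_comul_mul_wmul_deltaP_wS_deltaP f t).trans
      (sum_t2mul_comul_wone_eq_targetCounit f t).symm,
    fun f t => (sum_comul_mul_wmul_wS_deltaP_deltaP f t).trans
      (sum_t2mul_comul_wone_eq_sourceCounit f t).symm,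
    fun f t => (sum_comul_comul_wmul_wmul_wS_eq_wS f t).symm⟩

/-- the antipode of `ℂ^{M×M} ⋊ ℂ[K]` is an algebra
anti-homomorphism, an involution (`S ∘ S = id`), and satisfies the weak antipode
axioms `m∘(id⊗S)∘Δ(h) = (ε⊗id)(Δ(1)·(h⊗1))`, `m∘(S⊗id)∘Δ(h) = (id⊗ε)((1⊗h)·Δ(1))`
and `S(h) = ∑ S(h₍₁₎) h₍₂₎ S(h₍₃₎)`. -/
theorem stmt14 (htrans : MulAction.IsPretransitive K M) :
    (∀ f g : M × M × K → ℂ, wS (wmul f g) = wmul (wS g) (wS f)) ∧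
    (∀ f : M × M × K → ℂ, wS (wS f) = f) ∧
    (∀ (f : M × M × K → ℂ) (t : M × M × K),
      (∑ x : M × M × K, ∑ y : M × M × K,
          comul f x y * wmul (deltaP x) (wS (deltaP y)) t)
        = ∑ m : M, ∑ k : K,
            t2mul (comul (wone (M := M) (K := K)))
              (fun a b => f a * wone b) (m, m, k) t) ∧
    (∀ (f : M × M × K → ℂ) (t : M × M × K),
      (∑ x : M × M × K, ∑ y : M × M × K,
          comul f x y * wmul (wS (deltaP x)) (deltaP y) t)
        = ∑ m : M, ∑ k : K,
            t2mul (fun a b => wone a * f b)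
              (comul (wone (M := M) (K := K))) t (m, m, k)) ∧
    (∀ (f : M × M × K → ℂ) (t : M × M × K),
      wS f t
        = ∑ x : M × M × K, ∑ y : M × M × K, ∑ z : M × M × K,
            comul (fun w => comul f w z) x y *
              wmul (wmul (wS (deltaP x)) (deltaP y)) (wS (deltaP z)) t) :=
  stmt14_general

end Stmt14
end

section
/- Let K be a finite group, M a finite transitive K-set, and H = ℂ^{M×M} ⊗ ℂ[K] the weak Hopf algebra with structure as above. Then λ = Σ_{m ∈ M} Σ_{k ∈ K} δ_m ⊗ δ_m ⊗ k is a left integral in H: h·λ = ε_t(h)·λ for all h ∈ H, where ε_t(h) = ε(1_(1) h) 1_(2) with Δ(1) = 1_(1) ⊗ 1_(2). -/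
namespace Stmt15

variable {K M : Type} [Group K] [Fintype K] [Fintype M] [MulAction K M]
  [DecidableEq M] [DecidableEq K]

/-- The basis element `δ_x` of `ℂ^{M×M} ⊗ ℂ[K]` (function model). -/
def deltaP (x : M × M × K) : M × M × K → ℂ :=
  fun t => if t = x then 1 else 0

/-- The multiplication of `ℂ^{M×M} ⋊ ℂ[K]`. -/
noncomputable def wmul (f g : M × M × K → ℂ) : M × M × K → ℂ :=
  fun t => ∑ h : K, f (t.1, t.2.1, h) * g (h⁻¹ • t.1, h⁻¹ • t.2.1, h⁻¹ * t.2.2)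

/-- The unit `1 = ∑_{m,n} δ_m ⊗ δ_n ⊗ e`. -/
def wone : M × M × K → ℂ :=
  fun t => if t.2.2 = 1 then 1 else 0

/-- The comultiplication of `ℂ^{M×M} ⋊ ℂ[K]` (function model of `H ⊗ H`). -/
def comul (f : M × M × K → ℂ) : M × M × K → M × M × K → ℂ :=
  fun x y => if x.2.2 = y.2.2 ∧ x.2.1 = y.1 then f (x.1, y.2.1, x.2.2) else 0

/-- The counit `ε(δ_m ⊗ δ_n ⊗ k) = δ_m(n)`. -/
noncomputable def counit (f : M × M × K → ℂ) : ℂ :=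
  ∑ m : M, ∑ k : K, f (m, m, k)

/-- The element `λ = ∑_{m ∈ M} ∑_{k ∈ K} δ_m ⊗ δ_m ⊗ k`. -/
def lamInt : M × M × K → ℂ :=
  fun t => if t.1 = t.2.1 then 1 else 0

/-- The target counital map `ε_t(h) = ∑ ε(1₍₁₎ h) 1₍₂₎`. -/
noncomputable def epsT (f : M × M × K → ℂ) : M × M × K → ℂ :=
  fun t => ∑ x : M × M × K, ∑ y : M × M × K,
    comul (wone (M := M) (K := K)) x y * counit (wmul (deltaP x) f) * deltaP y t


lemma counit_wmul_delta (x : M × M × K) (f : M × M × K → ℂ) :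
    counit (wmul (deltaP x) f)
      = if x.1 = x.2.1 then ∑ k : K, f (x.2.2⁻¹ • x.1, x.2.2⁻¹ • x.1, k) else 0 := by
  rcases x with ⟨a, b, c⟩
  simp only [counit, wmul, deltaP]
  by_cases hab : a = b
  · subst hab
    rw [if_pos rfl]
    have h1 : ∀ m : M, ∀ k : K,
        ∑ h : K, (if ((m : M), m, h) = (a, a, c) then (1:ℂ) else 0)
            * f (h⁻¹ • m, h⁻¹ • m, h⁻¹ * k)
          = (if m = a then 1 else 0) * f (c⁻¹ • m, c⁻¹ • m, c⁻¹ * k) := by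
      intro m k
      by_cases hm : m = a
      · subst hm
        rw [Finset.sum_eq_single c]
        · simp
        · intro h _ hh; simp [Prod.ext_iff, hh]
        · simp
      · simp [Prod.ext_iff, hm]
    simp only [h1]
    rw [Finset.sum_comm]
    simp only [ite_mul, one_mul, zero_mul, Finset.sum_ite_eq', Finset.mem_univ, if_true]
    exact Fintype.sum_equiv (Equiv.mulLeft c⁻¹) _ _ (fun k => rfl)
  · rw [if_neg hab]
    refine Finset.sum_eq_zero fun m _ => Finset.sum_eq_zero fun k _ =>
      Finset.sum_eq_zero fun h _ => ?_
    have hne : ¬ ((m, m, h) = ((a : M), b, c)) := by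
      intro h'
      simp only [Prod.mk.injEq] at h'
      exact hab (h'.1.symm.trans h'.2.1)
    rw [if_neg hne, zero_mul]

lemma epsT_eq (f : M × M × K → ℂ) (t : M × M × K) :
    epsT f t = if t.2.2 = 1 then ∑ k : K, f (t.1, t.1, k) else 0 := by
  simp only [epsT]
  have : ∀ x : M × M × K, ∑ y : M × M × K,
      comul (wone (M := M) (K := K)) x y * counit (wmul (deltaP x) f) * deltaP y t
      = comul (wone (M := M) (K := K)) x t * counit (wmul (deltaP x) f) := by
    intro x
    rw [Finset.sum_eq_single t]
    · simp [deltaP]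
    · intro y _ hy; simp [deltaP, Ne.symm hy]
    · simp
  simp only [this]
  rcases t with ⟨m, n, c⟩
  simp only [comul, wone]
  simp only [counit_wmul_delta]
  rw [Finset.sum_eq_single (m, m, c)]
  · simp only [if_pos rfl]
    by_cases hc : c = 1
    · subst hc; simp
    · simp [hc]
  · rintro ⟨a, b, d⟩ _ hy
    by_cases h1 : d = c ∧ b = m
    · obtain ⟨rfl, rfl⟩ := h1
      have : a ≠ b := fun h => hy (by rw [h])
      simp [this]
    · rw [if_neg h1, zero_mul]
  · simp

/-- `λ = ∑_{m,k} δ_m ⊗ δ_m ⊗ k` is a left integral of the weak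
Hopf algebra `ℂ^{M×M} ⋊ ℂ[K]`: `h·λ = ε_t(h)·λ` for all `h`. -/
theorem stmt15 (htrans : MulAction.IsPretransitive K M) :
    ∀ f : M × M × K → ℂ,
      wmul f (lamInt (M := M) (K := K)) = wmul (epsT f) (lamInt (M := M) (K := K)) := by
  intro f
  funext t
  simp only [wmul, lamInt, epsT_eq, smul_left_cancel_iff]
  by_cases ht : t.1 = t.2.1
  · simp [ht, Finset.sum_ite_eq']
  · simp [ht]

end Stmt15
end
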